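/- Fix any bijection π : S → {1,…,|S|}. The minimum cardinality of an addition set F ⊆ (S × Q) \ E such that π is a nested ordering of the graph (S ∪ Q, E ∪ F) equals the sum over i = 1,…,|S| of |(⋃_{l ≤ i} N(π⁻¹(l))) \ N(π⁻¹(i))|; moreover this minimum is achieved by adding, for each i, exactly the edges from π⁻¹(i) to the questions in (⋃_{l ≤ i} N(π⁻¹(l))) \ N(π⁻¹(i)). -/

import Mathlib

/-!
For a fixed ordering `π`, nestedness forces the student in position `i` to answer every question
answered by some student in a position `l ≤ i`. So every valid addition set contains the edges
from `π⁻¹(i)` to `needed E π i`; conversely, adding exactly these edges makes the neighborhood of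
`π⁻¹(i)` equal to `⋃_{l ≤ i} N(π⁻¹(l))`, which is monotone in `i`.
-/

open Finset

/-- The neighborhood of a student `s` in the bipartite graph with edge set `E`. -/
def nbhd {S Q : Type*} [Fintype Q] [DecidableEq S] [DecidableEq Q]
    (E : Finset (S × Q)) (s : S) : Finset Q :=
  Finset.univ.filter fun q => (s, q) ∈ E

/-- The questions answered by some student in one of the weakest `i+1` positions
(under `π`) but not by the student in position `i`. -/
def needed {S Q : Type*} [Fintype S] [Fintype Q] [DecidableEq S] [DecidableEq Q]
    (E : Finset (S × Q)) (π : S ≃ Fin (Fintype.card S)) (i : Fin (Fintype.card S)) :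
    Finset Q :=
  ((Finset.Iic i).biUnion fun l => nbhd E (π.symm l)) \ nbhd E (π.symm i)

section
variable {S Q : Type*} [Fintype Q] [DecidableEq S] [DecidableEq Q]

@[simp]
lemma mem_nbhd {E : Finset (S × Q)} {s : S} {q : Q} : q ∈ nbhd E s ↔ (s, q) ∈ E := by
  simp [nbhd]

variable [Fintype S]

def IsNested (E : Finset (S × Q)) (π : S ≃ Fin (Fintype.card S)) : Prop :=
  ∀ s₁ s₂ : S, π s₂ ≤ π s₁ → nbhd E s₂ ⊆ nbhd E s₁

variable (E : Finset (S × Q)) (π : S ≃ Fin (Fintype.card S))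

def forcedEdges : Finset (S × Q) :=
  univ.biUnion fun i => (needed E π i).image fun q => (π.symm i, q)

lemma mem_needed {i : Fin (Fintype.card S)} {q : Q} :
    q ∈ needed E π i ↔ (∃ l ≤ i, (π.symm l, q) ∈ E) ∧ (π.symm i, q) ∉ E := by
  simp [needed]

lemma mem_forcedEdges {s : S} {q : Q} : (s, q) ∈ forcedEdges E π ↔ q ∈ needed E π (π s) := by
  simp only [forcedEdges, mem_biUnion, mem_image, mem_univ, true_and, Prod.mk.injEq]
  constructor
  · rintro ⟨i, q, hq, rfl, rfl⟩
    simpa using hq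
  · exact fun hq => ⟨π s, q, hq, by simp, rfl⟩

lemma disjoint_forcedEdges : Disjoint (forcedEdges E π) E := by
  rw [disjoint_left]
  rintro ⟨s, q⟩ h
  simpa using ((mem_needed E π).1 ((mem_forcedEdges E π).1 h)).2

lemma card_forcedEdges : #(forcedEdges E π) = ∑ i, #(needed E π i) := by
  rw [forcedEdges, card_biUnion]
  · exact sum_congr rfl fun i _ => card_image_of_injective _ fun a b h => by simpa using h
  · intro i _ j _ hij
    simp only [Function.onFun, disjoint_left, mem_image]
    rintro _ ⟨q, -, rfl⟩ ⟨q', -, h⟩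
    exact hij (π.symm.injective (Prod.mk.inj h).1.symm)

lemma nbhd_union_forcedEdges (s : S) :
    nbhd (E ∪ forcedEdges E π) s = (Iic (π s)).biUnion fun l => nbhd E (π.symm l) := by
  ext q
  simp only [mem_nbhd, mem_union, mem_forcedEdges, mem_needed, mem_biUnion, mem_Iic,
    Equiv.symm_apply_apply]
  constructor
  · rintro (h | ⟨h, -⟩)
    · exact ⟨π s, le_rfl, by simpa using h⟩
    · exact h
  · rintro h
    by_cases hs : (s, q) ∈ E
    · exact Or.inl hs
    · exact Or.inr ⟨h, hs⟩

lemma isNested_union_forcedEdges : IsNested (E ∪ forcedEdges E π) π := by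
  intro s₁ s₂ h
  rw [nbhd_union_forcedEdges, nbhd_union_forcedEdges]
  exact biUnion_subset_biUnion_of_subset_left _ (Iic_subset_Iic.2 h)

lemma forcedEdges_subset_of_isNested {F : Finset (S × Q)} (hF : IsNested (E ∪ F) π) :
    forcedEdges E π ⊆ F := by
  rintro ⟨s, q⟩ h
  obtain ⟨⟨l, hl, hlq⟩, hsq⟩ := (mem_needed E π).1 ((mem_forcedEdges E π).1 h)
  have hq : q ∈ nbhd (E ∪ F) s :=
    hF s (π.symm l) (by simpa using hl) (mem_nbhd.2 (mem_union_left _ hlq))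
  exact (mem_union.1 (mem_nbhd.1 hq)).resolve_left (by simpa using hsq)

lemma isLeast_card_forcedEdges :
    IsLeast {c | ∃ F : Finset (S × Q), Disjoint F E ∧ #F = c ∧ IsNested (E ∪ F) π}
      #(forcedEdges E π) :=
  ⟨⟨_, disjoint_forcedEdges E π, rfl, isNested_union_forcedEdges E π⟩,
    fun _ ⟨_, _, hc, hF⟩ => hc ▸ card_le_card (forcedEdges_subset_of_isNested E π hF)⟩

end

/-- For a fixed student ordering `π`, the minimum number of edge additions making `π`
nested equals `∑ i, |(⋃_{l ≤ i} N(π⁻¹(l))) \ N(π⁻¹(i))|`; moreover this minimum is achieved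
by adding, for each `i`, exactly the edges from `π⁻¹(i)` to the questions in that set. -/
theorem stmt9 {S Q : Type*} [Fintype S] [Fintype Q] [DecidableEq S] [DecidableEq Q]
    (E : Finset (S × Q)) (π : S ≃ Fin (Fintype.card S)) :
    sInf {c : ℕ | ∃ F : Finset (S × Q), Disjoint F E ∧ F.card = c ∧
        ∀ s₁ s₂ : S, π s₂ ≤ π s₁ → nbhd (E ∪ F) s₂ ⊆ nbhd (E ∪ F) s₁} =
      ∑ i : Fin (Fintype.card S), (needed E π i).card ∧
    (Disjoint (Finset.univ.biUnion fun i : Fin (Fintype.card S) =>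
        (needed E π i).image fun q => (π.symm i, q)) E ∧
     (Finset.univ.biUnion fun i : Fin (Fintype.card S) =>
        (needed E π i).image fun q => (π.symm i, q)).card =
        ∑ i : Fin (Fintype.card S), (needed E π i).card ∧
     ∀ s₁ s₂ : S, π s₂ ≤ π s₁ →
        nbhd (E ∪ Finset.univ.biUnion fun i : Fin (Fintype.card S) =>
          (needed E π i).image fun q => (π.symm i, q)) s₂ ⊆
        nbhd (E ∪ Finset.univ.biUnion fun i : Fin (Fintype.card S) =>
          (needed E π i).image fun q => (π.symm i, q)) s₁) := by
  refine ⟨?_, disjoint_forcedEdges E π, card_forcedEdges E π, isNested_union_forcedEdges E π⟩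
  rw [← card_forcedEdges]
  exact (isLeast_card_forcedEdges E π).csInf_eq
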